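/- arXiv:2201.12874 — 2 statements merged into one kernel-verified Lean document; each statement's English description precedes it below -/
import Mathlib

section
/- Let q ≥ 2 be real, let m be a positive integer dividing n, let H ∈ {−1, +1}^{n×n} satisfy H Hᵀ = n·I, and let B ∈ ℝ^{n×n} be the matrix whose n rows, partitioned into m consecutive blocks of n/m rows each, are all equal within block i to the i-th row of H. Then B has exactly m nonzero singular values, all equal to n/√m (so ‖B‖_{S_q} = m^{1/q}·n/√m), and every B' ∈ ℝ^{n×n} with ‖B' − B‖_{S_q} ≤ (1/4)‖B‖_{S_q} satisfies nnz(B') > n·m/4. -/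
open scoped BigOperators ENNReal
open Matrix

/-- Number of nonzero entries of a vector. -/
noncomputable def nnzv {n : ℕ} (x : Fin n → ℝ) : ℕ :=
  (Finset.univ.filter fun i => x i ≠ 0).card

/-- The ℓ_p norm of a vector, for a real exponent `p`. -/
noncomputable def lpNorm {n : ℕ} (p : ℝ) (x : Fin n → ℝ) : ℝ :=
  (∑ i, |x i| ^ p) ^ (1 / p)

/-- `IsHead x c y` : `y` is obtained from `x` by keeping (at most) `c` entries that are
largest in absolute value (exactly `min c n` of them, ties broken arbitrarily) and zeroing out the rest. -/
def IsHead {n : ℕ} (x : Fin n → ℝ) (c : ℕ) (y : Fin n → ℝ) : Prop :=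
  ∃ T : Finset (Fin n), T.card = min c n ∧ (∀ i ∈ T, y i = x i) ∧ (∀ i ∉ T, y i = 0) ∧
    ∀ i ∈ T, ∀ j ∉ T, |x j| ≤ |x i|

/-- The singular values of a real matrix: square roots of the eigenvalues of `Aᵀ * A`. -/
noncomputable def singVals {m n : Type*} [Fintype m] [Fintype n] [DecidableEq n]
    (A : Matrix m n ℝ) : n → ℝ :=
  fun j => Real.sqrt ((Matrix.isHermitian_conjTranspose_mul_self A).eigenvalues j)

/-- The Schatten p-(quasi)norm of a real matrix, for a real exponent `p > 0`. -/
noncomputable def schattenF {m n : Type*} [Fintype m] [Fintype n] [DecidableEq n]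
    (p : ℝ) (A : Matrix m n ℝ) : ℝ :=
  (∑ j, singVals A j ^ p) ^ (1 / p)

/-- The spectral norm (Schatten ∞-norm): the largest singular value. -/
noncomputable def specNorm {m n : Type*} [Fintype m] [Fintype n] [DecidableEq n]
    (A : Matrix m n ℝ) : ℝ :=
  ⨆ j, singVals A j

open Classical in
/-- The Schatten p-norm with exponent `p ∈ (0,∞]`. -/
noncomputable def schattenE {m n : Type*} [Fintype m] [Fintype n] [DecidableEq n]
    (p : ℝ≥0∞) (A : Matrix m n ℝ) : ℝ :=
  if p = ⊤ then specNorm A else schattenF p.toReal A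

/-- Number of nonzero entries of a matrix. -/
noncomputable def nnz {m n : Type*} [Fintype m] [Fintype n] (A : Matrix m n ℝ) : ℕ :=
  (Finset.univ.filter fun ij : m × n => A ij.1 ij.2 ≠ 0).card

/-!
Write `b = n / m` and let `G` consist of the first `m` rows of `H`, so that `B` repeats row `k`
of `G` on the `k`-th block of `b` rows. Then `BᵀB = b • GᵀG` and `GGᵀ = n • 1`, whence
`(BᵀB)² = (b n) • BᵀB`: every eigenvalue of `BᵀB` is `0` or `b n = n² / m`, and the trace `b n m`
forces exactly `m` of them to be nonzero.

For the sparsity bound put `E = B' - B` and let `u_k` be the normalised indicator of the `k`-th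
row block. If `B'` vanishes on block `k` in column `j`, then `(u_kᵀ E)_j² = b`, so
`b Z_k ≤ u_kᵀ (E Eᵀ) u_k` where `Z_k` counts such columns. Since `t ↦ t^(q/2)` is convex, the
diagonal of `E Eᵀ` in the orthonormal system `(u_k)` is dominated by its spectrum:
`∑ₖ (u_kᵀ E Eᵀ u_k)^(q/2) ≤ ‖E‖_{S_q}^q ≤ ‖B‖_{S_q}^q / 4^q = m (b n / 16)^(q/2)`. The power-mean
inequality turns this into `∑ₖ Z_k ≤ n m / 16`, and every other (block, column) pair carries a
nonzero entry of `B'`.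
-/

open Finset

theorem Matrix.IsHermitian.dotProduct_mulVec_eq_sum {n : Type*} [Fintype n] [DecidableEq n]
    {A : Matrix n n ℝ} (hA : A.IsHermitian) (x : EuclideanSpace ℝ n) :
    ⇑x ⬝ᵥ A *ᵥ ⇑x = ∑ j, hA.eigenvalues j * inner ℝ (hA.eigenvectorBasis j) x ^ 2 := by
  have hAT : Aᵀ = A := by simpa [conjTranspose_eq_transpose_of_trivial] using hA.eq
  have hinner : ∀ y : EuclideanSpace ℝ n, inner ℝ y (WithLp.toLp 2 (A *ᵥ ⇑x)) =
      ⇑y ⬝ᵥ A *ᵥ ⇑x := fun y => by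
    simp [EuclideanSpace.inner_eq_star_dotProduct, dotProduct_comm]
  rw [← hinner, ← hA.eigenvectorBasis.sum_inner_mul_inner]
  refine sum_congr rfl fun j _ => ?_
  rw [real_inner_comm, hinner, dotProduct_mulVec, ← mulVec_transpose, hAT,
    hA.mulVec_eigenvectorBasis, smul_dotProduct, smul_eq_mul, sq]
  simp [EuclideanSpace.inner_eq_star_dotProduct, dotProduct_comm]
  ring

theorem Matrix.PosSemidef.sum_rpow_dotProduct_mulVec_le {n ι : Type*} [Fintype n]
    [DecidableEq n] [Fintype ι] {A : Matrix n n ℝ} (hA : A.PosSemidef)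
    {u : ι → EuclideanSpace ℝ n} (hu : Orthonormal ℝ u) {p : ℝ} (hp : 1 ≤ p) :
    ∑ k, (⇑(u k) ⬝ᵥ A *ᵥ ⇑(u k)) ^ p ≤ ∑ j, hA.isHermitian.eigenvalues j ^ p := by
  set w := hA.isHermitian.eigenvectorBasis
  set c : ι → n → ℝ := fun k j => inner ℝ (w j) (u k) ^ 2
  have hc_row : ∀ k, ∑ j, c k j = 1 := fun k => by
    simp only [c, w.sum_sq_inner_right, hu.1 k, one_pow]
  have hc_col : ∀ j, ∑ k, c k j ≤ 1 := fun j => by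
    simpa [c, real_inner_comm, w.orthonormal.1 j] using
      hu.sum_inner_products_le (w j) (s := univ)
  calc ∑ k, (⇑(u k) ⬝ᵥ A *ᵥ ⇑(u k)) ^ p
      = ∑ k, (∑ j, c k j * hA.isHermitian.eigenvalues j) ^ p := by
        simp only [hA.isHermitian.dotProduct_mulVec_eq_sum, c, w, mul_comm]
    _ ≤ ∑ k, ∑ j, c k j * hA.isHermitian.eigenvalues j ^ p := sum_le_sum fun k _ =>
        Real.rpow_arith_mean_le_arith_mean_rpow _ _ _ (fun j _ => sq_nonneg _) (hc_row k)
          (fun j _ => hA.eigenvalues_nonneg j) hp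
    _ = ∑ j, (∑ k, c k j) * hA.isHermitian.eigenvalues j ^ p := by
        rw [sum_comm]
        simp only [sum_mul]
    _ ≤ ∑ j, hA.isHermitian.eigenvalues j ^ p := sum_le_sum fun j _ =>
        mul_le_of_le_one_left (Real.rpow_nonneg (hA.eigenvalues_nonneg j) p) (hc_col j)

theorem Matrix.eigenvalues_mul_conjTranspose_self_eq {n 𝕜 : Type*} [Fintype n] [DecidableEq n]
    [RCLike 𝕜] (A : Matrix n n 𝕜) :
    (isHermitian_mul_conjTranspose_self A).eigenvalues =
      (isHermitian_conjTranspose_mul_self A).eigenvalues :=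
  (IsHermitian.eigenvalues_eq_eigenvalues_iff _ _).mpr (charpoly_mul_comm _ _)

theorem Matrix.IsHermitian.eigenvalues_eq_zero_or_eq_of_mul_self {n : Type*} [Fintype n]
    [DecidableEq n] {A : Matrix n n ℝ} (hA : A.IsHermitian) {s : ℝ} (hAA : A * A = s • A)
    (j : n) : hA.eigenvalues j = 0 ∨ hA.eigenvalues j = s := by
  obtain ⟨i, hi⟩ : ∃ i, hA.eigenvectorBasis j i ≠ 0 := by
    by_contra! h
    exact hA.eigenvectorBasis.orthonormal.ne_zero j (PiLp.ext h)
  have hsq : A *ᵥ A *ᵥ ⇑(hA.eigenvectorBasis j) =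
      (hA.eigenvalues j * hA.eigenvalues j) • ⇑(hA.eigenvectorBasis j) := by
    rw [hA.mulVec_eigenvectorBasis, mulVec_smul, hA.mulVec_eigenvectorBasis, smul_smul]
  rw [mulVec_mulVec, hAA, smul_mulVec, hA.mulVec_eigenvectorBasis, smul_smul] at hsq
  have hroot := mul_right_cancel₀ hi (congrFun hsq i)
  rcases mul_eq_zero.mp (show hA.eigenvalues j * (hA.eigenvalues j - s) = 0 by
    linear_combination -hroot) with h | h
  · exact .inl h
  · exact .inr (sub_eq_zero.mp h)

theorem Matrix.IsHermitian.card_eigenvalues_ne_zero_mul_eq_trace {n : Type*} [Fintype n]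
    [DecidableEq n] {A : Matrix n n ℝ} (hA : A.IsHermitian) {s : ℝ}
    (h : ∀ j, hA.eigenvalues j = 0 ∨ hA.eigenvalues j = s) :
    (#{j | hA.eigenvalues j ≠ 0} : ℝ) * s = A.trace := by
  rw [hA.trace_eq_sum_eigenvalues, ← sum_filter_ne_zero, ← nsmul_eq_mul, ← sum_const]
  refine sum_congr rfl fun j hj => ?_
  simp only [mem_filter] at hj
  simpa using ((h j).resolve_left hj.2).symm

theorem Matrix.dotProduct_mul_conjTranspose_mulVec {m n : Type*} [Fintype m] [Fintype n]
    (E : Matrix m n ℝ) (x : m → ℝ) : x ⬝ᵥ (E * Eᴴ) *ᵥ x = ∑ j, (x ᵥ* E) j ^ 2 := by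
  rw [← mulVec_mulVec, dotProduct_mulVec, conjTranspose_eq_transpose_of_trivial,
    mulVec_transpose]
  simp only [dotProduct, sq]

theorem sum_le_card_mul_of_sum_rpow_le {κ : Type*} [Fintype κ] {x : κ → ℝ} (hx : ∀ k, 0 ≤ x k)
    {a p : ℝ} (ha : 0 ≤ a) (hp : 1 ≤ p) (h : ∑ k, x k ^ p ≤ Fintype.card κ * a ^ p) :
    ∑ k, x k ≤ Fintype.card κ * a := by
  rcases (Fintype.card κ).eq_zero_or_pos with h0 | hpos
  · simp [Fintype.card_eq_zero_iff.mp h0]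
  have hN : (0 : ℝ) < Fintype.card κ := by exact_mod_cast hpos
  have hmean := Real.arith_mean_le_rpow_mean univ (fun _ => (Fintype.card κ : ℝ)⁻¹) x
    (fun _ _ => by positivity) (by simp [hN.ne']) (fun k _ => hx k) hp
  rw [← mul_sum, ← mul_sum] at hmean
  calc ∑ k, x k = Fintype.card κ * ((Fintype.card κ : ℝ)⁻¹ * ∑ k, x k) := by field_simp
    _ ≤ Fintype.card κ * ((Fintype.card κ : ℝ)⁻¹ * ∑ k, x k ^ p) ^ (1 / p) := by gcongr
    _ ≤ Fintype.card κ * (a ^ p) ^ (1 / p) := by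
        gcongr
        · exact mul_nonneg (by positivity) (sum_nonneg fun k _ => Real.rpow_nonneg (hx k) p)
        · rwa [inv_mul_le_iff₀ hN]
    _ = Fintype.card κ * a := by
        rw [← Real.rpow_mul ha, mul_one_div_cancel (by linarith), Real.rpow_one]

theorem Fin.card_filter_divNat_eq {m b : ℕ} (k : Fin m) :
    #{i : Fin (m * b) | i.divNat = k} = b := by
  rw [card_equiv finProdFinEquiv.symm (t := {k} ×ˢ univ) fun i => by simp [eq_comm]]
  simp

section Schatten

variable {m n : Type*} [Fintype m] [Fintype n] [DecidableEq n]

theorem schattenF_nonneg (q : ℝ) (A : Matrix m n ℝ) : 0 ≤ schattenF q A :=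
  Real.rpow_nonneg (sum_nonneg fun _ _ => Real.rpow_nonneg (Real.sqrt_nonneg _) q) _

theorem schattenF_rpow (A : Matrix m n ℝ) {q : ℝ} (hq : q ≠ 0) :
    schattenF q A ^ q = ∑ j, singVals A j ^ q := by
  rw [schattenF, one_div, Real.rpow_inv_rpow _ hq]
  exact sum_nonneg fun j _ => Real.rpow_nonneg (Real.sqrt_nonneg _) q

theorem schattenF_eq_of_singVals_eq_zero_or {A : Matrix m n ℝ} {σ : ℝ} (hσ : 0 ≤ σ)
    (hA : ∀ j, singVals A j = 0 ∨ singVals A j = σ) {q : ℝ} (hq : q ≠ 0) :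
    schattenF q A = (#{j | singVals A j ≠ 0} : ℝ) ^ (1 / q) * σ := by
  have hsum : ∑ j, singVals A j ^ q = #{j | singVals A j ≠ 0} * σ ^ q := by
    rw [← sum_filter_of_ne (p := fun j => singVals A j ≠ 0) fun j _ h => ?_, ← nsmul_eq_mul,
      ← sum_const]
    · refine sum_congr rfl fun j hj => ?_
      simp only [mem_filter] at hj
      rw [(hA j).resolve_left hj.2]
    · rintro h0
      simp [h0, Real.zero_rpow hq] at h
  rw [schattenF, hsum, Real.mul_rpow (Nat.cast_nonneg _) (Real.rpow_nonneg hσ q),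
    ← Real.rpow_mul hσ, mul_one_div_cancel hq, Real.rpow_one]

end Schatten

section RowRepetition

variable {ι κ ν : Type*} [Fintype ι] [Fintype κ] [DecidableEq κ] {f : ι → κ} {b : ℕ}

theorem conjTranspose_mul_submatrix_self (hf : ∀ k, #{i | f i = k} = b) (G : Matrix κ ν ℝ) :
    (G.submatrix f id)ᴴ * G.submatrix f id = (b : ℝ) • (Gᴴ * G) := by
  ext j l
  simp only [mul_apply, conjTranspose_apply, submatrix_apply, id, star_trivial,
    Matrix.smul_apply, smul_eq_mul, mul_sum]
  rw [← sum_fiberwise univ f]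
  refine sum_congr rfl fun k _ => ?_
  rw [sum_congr rfl fun i hi => by rw [(mem_filter.mp hi).2], sum_const, hf, nsmul_eq_mul]

variable [Fintype ν] [DecidableEq ν] {G : Matrix κ ν ℝ} {c : ℝ}

theorem conjTranspose_mul_submatrix_self_mul_self (hf : ∀ k, #{i | f i = k} = b)
    (hG : G * Gᴴ = c • 1) :
    (G.submatrix f id)ᴴ * G.submatrix f id * ((G.submatrix f id)ᴴ * G.submatrix f id) =
      (b * c) • ((G.submatrix f id)ᴴ * G.submatrix f id) := by
  rw [conjTranspose_mul_submatrix_self hf, smul_mul_smul_comm, Matrix.mul_assoc,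
    ← Matrix.mul_assoc G, hG, smul_mul, Matrix.one_mul, Matrix.mul_smul, smul_smul, smul_smul]
  ring_nf

theorem singVals_submatrix_eq_zero_or (hf : ∀ k, #{i | f i = k} = b) (hG : G * Gᴴ = c • 1)
    (j : ν) :
    singVals (G.submatrix f id) j = 0 ∨ singVals (G.submatrix f id) j = √(b * c) := by
  rcases (isHermitian_conjTranspose_mul_self _).eigenvalues_eq_zero_or_eq_of_mul_self
    (conjTranspose_mul_submatrix_self_mul_self hf hG) j with h | h <;>
  simp only [singVals, h] <;> simp

theorem card_singVals_submatrix_ne_zero (hf : ∀ k, #{i | f i = k} = b) (hb : 0 < b)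
    (hG : G * Gᴴ = c • 1) (hc : 0 < c) :
    #{j | singVals (G.submatrix f id) j ≠ 0} = Fintype.card κ := by
  have hM := isHermitian_conjTranspose_mul_self (G.submatrix f id)
  have hcount := hM.card_eigenvalues_ne_zero_mul_eq_trace
    (hM.eigenvalues_eq_zero_or_eq_of_mul_self (conjTranspose_mul_submatrix_self_mul_self hf hG))
  have htrace : ((G.submatrix f id)ᴴ * G.submatrix f id).trace = b * c * Fintype.card κ := by
    rw [conjTranspose_mul_submatrix_self hf, trace_smul, trace_mul_comm, hG, trace_smul,
      trace_one, smul_eq_mul, smul_eq_mul, mul_assoc]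
  have hbc : (b : ℝ) * c ≠ 0 := by positivity
  have hcard : #{j | hM.eigenvalues j ≠ 0} = Fintype.card κ := by
    exact_mod_cast mul_right_cancel₀ hbc (hcount.trans (htrace.trans (mul_comm _ _)))
  rw [← hcard]
  exact congrArg card (filter_congr fun j _ =>
    not_congr (Real.sqrt_eq_zero (eigenvalues_conjTranspose_mul_self_nonneg _ j)))

theorem schattenF_submatrix (hf : ∀ k, #{i | f i = k} = b) (hb : 0 < b)
    (hG : G * Gᴴ = c • 1) (hc : 0 < c) {q : ℝ} (hq : q ≠ 0) :
    schattenF q (G.submatrix f id) = (Fintype.card κ : ℝ) ^ (1 / q) * √(b * c) := by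
  rw [schattenF_eq_of_singVals_eq_zero_or (Real.sqrt_nonneg _)
    (singVals_submatrix_eq_zero_or hf hG) hq, card_singVals_submatrix_ne_zero hf hb hG hc]

end RowRepetition

noncomputable def blockIndicator {ι κ : Type*} [DecidableEq κ] (f : ι → κ) (b : ℕ) (k : κ) :
    EuclideanSpace ℝ ι :=
  WithLp.toLp 2 fun i => if f i = k then (√b)⁻¹ else 0

noncomputable def zeroBlockCols {ι κ ν : Type*} [Fintype ι] [Fintype ν] [DecidableEq κ]
    (f : ι → κ) (A : Matrix ι ν ℝ) (k : κ) : Finset ν :=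
  {j | ∀ i, f i = k → A i j = 0}

section BlockSparsity

variable {ι κ : Type*} [Fintype ι] [DecidableEq κ]

theorem sum_card_compl_zeroBlockCols_le_nnz [Fintype κ] {ν : Type*} [Fintype ν] [DecidableEq ν]
    (f : ι → κ) (A : Matrix ι ν ℝ) :
    ∑ k, #(zeroBlockCols f A k)ᶜ ≤ nnz A := by
  calc ∑ k, #(zeroBlockCols f A k)ᶜ = #{kj : κ × ν | kj.2 ∉ zeroBlockCols f A kj.1} := by
        simp only [card_filter, Fintype.sum_prod_type]
        refine sum_congr rfl fun k _ => ?_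
        rw [← card_filter]
        congr 1
        ext j
        simp
    _ ≤ nnz A := by
        refine card_le_card_of_surjOn (fun ij => (f ij.1, ij.2)) fun ⟨k, j⟩ hkj => ?_
        rw [mem_coe, mem_filter_univ, zeroBlockCols, mem_filter_univ] at hkj
        push Not at hkj
        obtain ⟨i, rfl, hi⟩ := hkj
        exact ⟨(i, j), by simpa [nnz] using hi, rfl⟩

variable {f : ι → κ} {b : ℕ}

theorem orthonormal_blockIndicator (hf : ∀ k, #{i | f i = k} = b) (hb : 0 < b) :
    Orthonormal ℝ (blockIndicator f b) := by
  have hb' : (0 : ℝ) < b := by exact_mod_cast hb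
  rw [orthonormal_iff_ite]
  intro k l
  simp only [blockIndicator, EuclideanSpace.inner_toLp_toLp, dotProduct, star_trivial,
    mul_ite, ite_mul, mul_zero, zero_mul]
  split_ifs with hkl
  · subst hkl
    rw [← sum_filter, sum_ite_of_true fun i hi => (mem_filter.mp hi).2, sum_const, hf,
      nsmul_eq_mul, ← mul_inv, Real.mul_self_sqrt hb'.le, mul_inv_cancel₀ hb'.ne']
  · exact sum_eq_zero fun i _ => by
      split_ifs with h1 h2 <;> first | rfl | exact absurd (h1.symm.trans h2) hkl

theorem mul_card_zeroBlockCols_le {ν : Type*} [Fintype ν] (hf : ∀ k, #{i | f i = k} = b)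
    (hb : 0 < b) {G : Matrix κ ν ℝ} (hG : ∀ k j, |G k j| = 1) (A : Matrix ι ν ℝ) (k : κ) :
    (b : ℝ) * #(zeroBlockCols f A k) ≤ ⇑(blockIndicator f b k) ⬝ᵥ
      ((A - G.submatrix f id) * (A - G.submatrix f id)ᴴ) *ᵥ ⇑(blockIndicator f b k) := by
  have hb' : (0 : ℝ) < b := by exact_mod_cast hb
  have hcol : ∀ j ∈ zeroBlockCols f A k,
      (⇑(blockIndicator f b k) ᵥ* (A - G.submatrix f id)) j ^ 2 = b := by
    intro j hj
    rw [zeroBlockCols, mem_filter_univ] at hj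
    have hentry : (⇑(blockIndicator f b k) ᵥ* (A - G.submatrix f id)) j =
        -(b * (√b)⁻¹ * G k j) := by
      simp only [vecMul, dotProduct, blockIndicator, WithLp.ofLp_toLp, ite_mul, zero_mul,
        ← sum_filter, Matrix.sub_apply, submatrix_apply, id]
      rw [sum_congr rfl fun i hi => by rw [hj i (mem_filter.mp hi).2, (mem_filter.mp hi).2],
        sum_const, hf, nsmul_eq_mul]
      ring
    have hG2 : G k j ^ 2 = 1 := by rw [← sq_abs, hG, one_pow]
    rw [hentry, neg_sq, mul_pow, mul_pow, inv_pow, Real.sq_sqrt hb'.le, hG2]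
    field_simp
  calc (b : ℝ) * #(zeroBlockCols f A k)
      = ∑ j ∈ zeroBlockCols f A k, (⇑(blockIndicator f b k) ᵥ* (A - G.submatrix f id)) j ^ 2 := by
        rw [sum_congr rfl hcol, sum_const, nsmul_eq_mul, mul_comm]
    _ ≤ ∑ j, (⇑(blockIndicator f b k) ᵥ* (A - G.submatrix f id)) j ^ 2 :=
        sum_le_sum_of_subset_of_nonneg (subset_univ _) fun j _ _ => sq_nonneg _
    _ = _ := (dotProduct_mul_conjTranspose_mulVec _ _).symm

theorem sum_rpow_mul_card_zeroBlockCols_le [Fintype κ] [DecidableEq ι]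
    (hf : ∀ k, #{i | f i = k} = b) (hb : 0 < b)
    {G : Matrix κ ι ℝ} (hG : ∀ k j, |G k j| = 1) (A : Matrix ι ι ℝ) {q : ℝ} (hq : 2 ≤ q) :
    ∑ k, ((b : ℝ) * #(zeroBlockCols f A k)) ^ (q / 2) ≤
      ∑ j, singVals (A - G.submatrix f id) j ^ q := by
  set E := A - G.submatrix f id
  have hE := posSemidef_self_mul_conjTranspose E
  calc ∑ k, ((b : ℝ) * #(zeroBlockCols f A k)) ^ (q / 2)
      ≤ ∑ k, (⇑(blockIndicator f b k) ⬝ᵥ (E * Eᴴ) *ᵥ ⇑(blockIndicator f b k)) ^ (q / 2) :=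
        sum_le_sum fun k _ => Real.rpow_le_rpow (by positivity)
          (mul_card_zeroBlockCols_le hf hb hG A k) (by linarith)
    _ ≤ ∑ j, hE.isHermitian.eigenvalues j ^ (q / 2) :=
        hE.sum_rpow_dotProduct_mulVec_le (orthonormal_blockIndicator hf hb) (by linarith)
    _ = ∑ j, singVals E j ^ q := by
        refine sum_congr rfl fun j _ => ?_
        rw [singVals, ← Real.rpow_div_two_eq_sqrt _ (eigenvalues_conjTranspose_mul_self_nonneg _ j),
          ← eigenvalues_mul_conjTranspose_self_eq]

theorem le_nnz_of_schattenF_sub_le [Fintype κ] [DecidableEq ι] [Nonempty ι]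
    (hf : ∀ k, #{i | f i = k} = b) (hb : 0 < b)
    {G : Matrix κ ι ℝ} (hG : ∀ k j, |G k j| = 1) (hGG : G * Gᴴ = (Fintype.card ι : ℝ) • 1)
    {q ε : ℝ} (hq : 2 ≤ q) (hε : 0 ≤ ε) {A : Matrix ι ι ℝ}
    (hA : schattenF q (A - G.submatrix f id) ≤ ε * schattenF q (G.submatrix f id)) :
    (1 - ε ^ 2) * Fintype.card κ * Fintype.card ι ≤ nnz A := by
  set N : ℝ := (Fintype.card ι : ℝ)
  set K : ℝ := (Fintype.card κ : ℝ)
  set Z : κ → ℝ := fun k => (#(zeroBlockCols f A k) : ℝ)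
  have hN : 0 < N := by positivity
  have hb' : (0 : ℝ) < b := by exact_mod_cast hb
  have hq0 : 0 < q := by linarith
  have hbudget : ∑ k, (b * Z k) ^ (q / 2) ≤ K * (ε ^ 2 * (b * N)) ^ (q / 2) :=
    calc ∑ k, (b * Z k) ^ (q / 2)
        ≤ ∑ j, singVals (A - G.submatrix f id) j ^ q :=
          sum_rpow_mul_card_zeroBlockCols_le hf hb hG A hq
      _ = schattenF q (A - G.submatrix f id) ^ q := (schattenF_rpow _ hq0.ne').symm
      _ ≤ (ε * schattenF q (G.submatrix f id)) ^ q :=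
          Real.rpow_le_rpow (schattenF_nonneg _ _) hA hq0.le
      _ = K * (ε ^ 2 * (b * N)) ^ (q / 2) := by
          rw [schattenF_submatrix hf hb hGG hN hq0.ne', Real.mul_rpow hε (by positivity),
            Real.mul_rpow (by positivity) (by positivity), ← Real.rpow_mul (by positivity),
            one_div_mul_cancel hq0.ne', Real.rpow_one,
            Real.mul_rpow (by positivity) (by positivity),
            Real.rpow_div_two_eq_sqrt _ (sq_nonneg ε), Real.sqrt_sq hε,
            Real.rpow_div_two_eq_sqrt _ (by positivity)]
          ring
  have hZ : ∑ k, Z k ≤ K * (ε ^ 2 * N) := by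
    have := sum_le_card_mul_of_sum_rpow_le (fun k => by positivity) (by positivity)
      (by linarith) hbudget
    rw [← mul_sum] at this
    exact le_of_mul_le_mul_left (this.trans_eq (by ring)) hb'
  have hnnz : K * N - ∑ k, Z k ≤ nnz A :=
    calc K * N - ∑ k, Z k = ∑ k, ((#(zeroBlockCols f A k)ᶜ : ℕ) : ℝ) := by
          simp only [card_compl, Nat.cast_sub (card_le_univ _), sum_sub_distrib, sum_const,
            card_univ, nsmul_eq_mul, Z, K, N]
      _ ≤ nnz A := by exact_mod_cast sum_card_compl_zeroBlockCols_le_nnz f A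
  linarith

end BlockSparsity

/-- the block-repeated Hadamard-row matrix `B` has exactly `m` nonzero
singular values, all equal to `n/√m`, so `‖B‖_{S_q} = m^{1/q}·n/√m`; and every
`(1/4, S_q)`-norm approximation of `B` (for `q ≥ 2`) has more than `nm/4` nonzeros. -/
theorem stmt9 (q : ℝ) (hq : 2 ≤ q) (n m : ℕ) (hm : 0 < m) (hmn : m ≤ n) (hdvd : m ∣ n)
    (H B : Matrix (Fin n) (Fin n) ℝ)
    (hH : ∀ i j, H i j = 1 ∨ H i j = -1)
    (hHH : H * Hᵀ = (n : ℝ) • (1 : Matrix (Fin n) (Fin n) ℝ))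
    (hB : ∀ i j k : Fin n, (k : ℕ) = (i : ℕ) / (n / m) → B i j = H k j) :
    (Finset.univ.filter fun i : Fin n => singVals B i ≠ 0).card = m ∧
    (∀ i : Fin n, singVals B i ≠ 0 → singVals B i = (n : ℝ) / Real.sqrt m) ∧
    schattenF q B = (m : ℝ) ^ (1 / q) * ((n : ℝ) / Real.sqrt m) ∧
    ∀ B' : Matrix (Fin n) (Fin n) ℝ,
      schattenF q (B' - B) ≤ (1 / 4) * schattenF q B →
      (n : ℝ) * m / 4 < (nnz B' : ℝ) := by
  obtain ⟨b, rfl⟩ := hdvd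
  have hb : 0 < b := Nat.pos_of_mul_pos_left (hm.trans_le hmn)
  have : Nonempty (Fin (m * b)) := ⟨⟨0, hm.trans_le hmn⟩⟩
  set G : Matrix (Fin m) (Fin (m * b)) ℝ := H.submatrix (Fin.castLE hmn) id
  have hBG : B = G.submatrix Fin.divNat id := by
    ext i j
    exact hB i j _ (by simp [Nat.mul_div_cancel_left b hm])
  subst hBG
  have hf : ∀ k, #{i : Fin (m * b) | i.divNat = k} = b := Fin.card_filter_divNat_eq
  have hG : ∀ k j, |G k j| = 1 := fun k j => by
    rcases hH (Fin.castLE hmn k) j with h | h <;> simp [G, h]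
  have hGG : G * Gᴴ = (Fintype.card (Fin (m * b)) : ℝ) • 1 := by
    ext k l
    simpa [G, mul_apply, one_apply, Fin.castLE_inj] using
      congrFun (congrFun hHH (Fin.castLE hmn k)) (Fin.castLE hmn l)
  have hc : (0 : ℝ) < Fintype.card (Fin (m * b)) := by positivity
  have hσ : √(b * (Fintype.card (Fin (m * b)) : ℝ)) = ((m * b : ℕ) : ℝ) / √m := by
    rw [Fintype.card_fin, eq_div_iff (by positivity), ← Real.sqrt_mul (by positivity)]
    push_cast
    rw [show (b : ℝ) * (m * b) * m = (m * b) ^ 2 by ring, Real.sqrt_sq (by positivity)]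
  refine ⟨by simpa using card_singVals_submatrix_ne_zero hf hb hGG hc,
    fun i hi => ((singVals_submatrix_eq_zero_or hf hGG i).resolve_left hi).trans hσ, ?_,
    fun B' hB' => ?_⟩
  · rw [schattenF_submatrix hf hb hGG hc (by linarith), hσ, Fintype.card_fin]
  · have := le_nnz_of_schattenF_sub_le hf hb hG hGG hq (by norm_num) hB'
    simp only [Fintype.card_fin] at this
    have hmb : (0 : ℝ) < ((m * b : ℕ) : ℝ) * m := by positivity
    linarith
end

section
/- Let p > 0 be real, let 0 < ε ≤ 1/2, and let ε₁, ε₂ > 0. Suppose B ∈ {0,1}^{n×n} is rigid in the sense that every matrix S ∈ ℝ^{n×n} with nnz(S) < ε₂·n² satisfies rank(B − S) > ε₁·n. Let A = (n/ε)·I + B. Then: (a) ‖A − (n/ε)·I‖_{S_p} ≤ 2ε‖A‖_{S_p}, and nnz((n/ε)·I) = n; (b) A has rank n; (c) every matrix Ã ∈ ℝ^{n×n} with rank(A − Ã) ≤ ε₁·rank(A) satisfies nnz(Ã) ≥ ε₂·n² − n. -/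
open scoped BigOperators ENNReal
open Matrix

/-! Since `B` has 0/1 entries, `‖Bx‖ ≤ n‖x‖`, so every singular value of `B` is at most `n`,
while every singular value of `A = (n/ε)I + B` is at least `n/ε - n`. For `ε ≤ 1/2` this gives
`σⱼ(B) ≤ 2ε σⱼ(A)` termwise, hence the Schatten bound, and it also shows that `A` is injective.
If `rank(A - Ã) ≤ ε₁ n`, then `S = Ã - (n/ε)I` has `B - S = A - Ã`, so rigidity forces
`nnz S ≥ ε₂ n²`, while `nnz S ≤ nnz Ã + n`. -/

namespace Matrix

variable {m n : Type*} [Fintype m] [Fintype n] [DecidableEq n]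

theorem singVals_eq_norm_toEuclideanLin_eigenvectorBasis (M : Matrix m n ℝ) (j : n) :
    singVals M j =
      ‖M.toEuclideanLin ((isHermitian_conjTranspose_mul_self M).eigenvectorBasis j)‖ := by
  rw [singVals, IsHermitian.eigenvalues_eq, ← mulVec_mulVec, EuclideanSpace.norm_eq]
  congr 1
  simp only [conjTranspose_eq_transpose_of_trivial, RCLike.re_to_real, star_trivial,
    ofLp_toLpLin, toLin'_apply, Real.norm_eq_abs, sq_abs]
  rw [dotProduct_mulVec, vecMul_transpose]
  simp [dotProduct, sq]

theorem singVals_nonneg (M : Matrix m n ℝ) (j : n) : 0 ≤ singVals M j := Real.sqrt_nonneg _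

theorem singVals_le_of_forall_norm_le {M : Matrix m n ℝ} {K : ℝ}
    (h : ∀ x, ‖M.toEuclideanLin x‖ ≤ K * ‖x‖) (j : n) : singVals M j ≤ K := by
  have hv := h ((isHermitian_conjTranspose_mul_self M).eigenvectorBasis j)
  rwa [OrthonormalBasis.norm_eq_one, mul_one,
    ← singVals_eq_norm_toEuclideanLin_eigenvectorBasis] at hv

theorem le_singVals_of_forall_le_norm {M : Matrix m n ℝ} {K : ℝ}
    (h : ∀ x, K * ‖x‖ ≤ ‖M.toEuclideanLin x‖) (j : n) : K ≤ singVals M j := by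
  have hv := h ((isHermitian_conjTranspose_mul_self M).eigenvectorBasis j)
  rwa [OrthonormalBasis.norm_eq_one, mul_one,
    ← singVals_eq_norm_toEuclideanLin_eigenvectorBasis] at hv

theorem norm_toEuclideanLin_le_of_abs_le_one {M : Matrix m n ℝ} (hM : ∀ i j, |M i j| ≤ 1)
    (x : EuclideanSpace ℝ n) :
    ‖M.toEuclideanLin x‖ ≤ √(Fintype.card m * Fintype.card n) * ‖x‖ := by
  have hrow (i : m) : (M *ᵥ x) i ^ 2 ≤ Fintype.card n * ‖x‖ ^ 2 := by
    calc (M *ᵥ x) i ^ 2 ≤ (∑ j, M i j ^ 2) * ∑ j, x j ^ 2 :=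
          Finset.sum_mul_sq_le_sq_mul_sq _ _ _
      _ ≤ (∑ _j : n, 1) * ‖x‖ ^ 2 := by
          rw [EuclideanSpace.real_norm_sq_eq]
          gcongr with j
          exact (sq_le_one_iff_abs_le_one _).2 (hM i j)
      _ = Fintype.card n * ‖x‖ ^ 2 := by simp
  have hsq : ‖M.toEuclideanLin x‖ ^ 2 ≤ (Fintype.card m * Fintype.card n) * ‖x‖ ^ 2 := by
    calc ‖M.toEuclideanLin x‖ ^ 2 = ∑ i, (M *ᵥ x) i ^ 2 := EuclideanSpace.real_norm_sq_eq _
      _ ≤ ∑ _i : m, Fintype.card n * ‖x‖ ^ 2 := Finset.sum_le_sum fun i _ => hrow i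
      _ = (Fintype.card m * Fintype.card n) * ‖x‖ ^ 2 := by simp [mul_assoc]
  calc ‖M.toEuclideanLin x‖ = √(‖M.toEuclideanLin x‖ ^ 2) := (Real.sqrt_sq (norm_nonneg _)).symm
    _ ≤ √((Fintype.card m * Fintype.card n) * ‖x‖ ^ 2) := Real.sqrt_le_sqrt hsq
    _ = √(Fintype.card m * Fintype.card n) * ‖x‖ := by
        rw [Real.sqrt_mul (by positivity), Real.sqrt_sq (norm_nonneg _)]

theorem le_norm_toEuclideanLin_smul_one_add {M : Matrix n n ℝ} {K : ℝ} (c : ℝ)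
    {x : EuclideanSpace ℝ n} (hx : ‖M.toEuclideanLin x‖ ≤ K * ‖x‖) :
    (|c| - K) * ‖x‖ ≤ ‖(c • 1 + M).toEuclideanLin x‖ := by
  have hsplit : (c • 1 + M).toEuclideanLin x = c • x + M.toEuclideanLin x := by simp
  have := norm_sub_le_norm_add (c • x) (M.toEuclideanLin x)
  rw [norm_smul, Real.norm_eq_abs] at this
  rw [hsplit]
  linarith

theorem rank_eq_card_of_le_norm_toEuclideanLin {M : Matrix m n ℝ} {K : ℝ} (hK : 0 < K)
    (h : ∀ x, K * ‖x‖ ≤ ‖M.toEuclideanLin x‖) : M.rank = Fintype.card n := by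
  have hinj : Function.Injective M.mulVecLin := by
    rw [← LinearMap.ker_eq_bot, LinearMap.ker_eq_bot']
    intro v hv
    rw [mulVecLin_apply] at hv
    have hle : K * ‖WithLp.toLp 2 v‖ ≤ K * 0 := by simpa [hv] using h (WithLp.toLp 2 v)
    simpa using norm_le_zero_iff.1 (le_of_mul_le_mul_left hle hK)
  rw [Matrix.rank, LinearMap.finrank_range_of_inj hinj, Module.finrank_fintype_fun_eq_card]

theorem schattenF_le_mul_of_singVals_le {m' : Type*} [Fintype m'] {M : Matrix m n ℝ}
    {N : Matrix m' n ℝ} {c p : ℝ} (hc : 0 ≤ c) (hp : 0 < p)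
    (h : ∀ j, singVals M j ≤ c * singVals N j) : schattenF p M ≤ c * schattenF p N := by
  have hsum : ∑ j, singVals M j ^ p ≤ c ^ p * ∑ j, singVals N j ^ p := by
    rw [Finset.mul_sum]
    gcongr with j
    rw [← Real.mul_rpow hc (singVals_nonneg N j)]
    exact Real.rpow_le_rpow (singVals_nonneg M j) (h j) hp.le
  have hN : 0 ≤ ∑ j, singVals N j ^ p :=
    Finset.sum_nonneg fun j _ => Real.rpow_nonneg (singVals_nonneg N j) p
  calc schattenF p M ≤ (c ^ p * ∑ j, singVals N j ^ p) ^ (1 / p) := by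
        unfold schattenF
        gcongr
        exact Finset.sum_nonneg fun j _ => Real.rpow_nonneg (singVals_nonneg M j) p
    _ = c * schattenF p N := by
        rw [Real.mul_rpow (Real.rpow_nonneg hc p) hN, ← Real.rpow_mul hc,
          mul_one_div_cancel hp.ne', Real.rpow_one, schattenF]

end Matrix

section nnz

variable {m n : Type*} [Fintype m] [Fintype n]

theorem nnz_add_le (A B : Matrix m n ℝ) : nnz (A + B) ≤ nnz A + nnz B := by
  classical
  unfold nnz
  refine (Finset.card_le_card ?_).trans (Finset.card_union_le _ _)
  rw [← Finset.filter_or]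
  refine Finset.monotone_filter_right _ fun ij _ hij => ?_
  by_contra! h
  exact hij (by rw [Matrix.add_apply, h.1, h.2, add_zero])

theorem nnz_neg (A : Matrix m n ℝ) : nnz (-A) = nnz A := by
  simp [nnz]

theorem nnz_sub_le (A B : Matrix m n ℝ) : nnz (A - B) ≤ nnz A + nnz B := by
  simpa [sub_eq_add_neg, nnz_neg] using nnz_add_le A (-B)

theorem nnz_diagonal [DecidableEq n] (d : n → ℝ) :
    nnz (Matrix.diagonal d) = (Finset.univ.filter fun i => d i ≠ 0).card := by
  unfold nnz
  rw [← Finset.card_map ⟨fun i => (i, i), fun a b h => congrArg Prod.fst h⟩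
    (s := Finset.univ.filter fun i => d i ≠ 0)]
  refine congrArg Finset.card (Finset.ext fun ⟨i, j⟩ => ?_)
  simp only [Finset.mem_filter_univ, Finset.mem_map]
  constructor
  · intro h
    obtain rfl : i = j := by_contra fun hij => h (diagonal_apply_ne d hij)
    exact ⟨i, by simpa using h, rfl⟩
  · rintro ⟨k, hk, hkij⟩
    obtain ⟨rfl, rfl⟩ := Prod.mk.inj hkij
    simpa using hk

theorem nnz_smul_one [DecidableEq n] {c : ℝ} (hc : c ≠ 0) :
    nnz (c • (1 : Matrix n n ℝ)) = Fintype.card n := by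
  simp [Matrix.smul_one_eq_diagonal, nnz_diagonal, hc]

theorem sub_nnz_le_nnz_of_rank_sub_le {B D At : Matrix m n ℝ} {r t : ℝ}
    (hrigid : ∀ S, (nnz S : ℝ) < t → r < (B - S).rank) (h : ((D + B - At).rank : ℝ) ≤ r) :
    t - nnz D ≤ nnz At := by
  by_contra! hlt
  have hS : (nnz (At - D) : ℝ) < t := by
    have : (nnz (At - D) : ℝ) ≤ nnz At + nnz D := by exact_mod_cast nnz_sub_le At D
    linarith
  have := hrigid _ hS
  rw [show B - (At - D) = D + B - At by abel] at this
  linarith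

end nnz

theorem stmt19_general (p : ℝ) (hp : 0 < p) (ε ε₁ ε₂ : ℝ) (hε0 : 0 < ε) (hε : ε ≤ 1 / 2)
    (n : ℕ)
    (B : Matrix (Fin n) (Fin n) ℝ) (hB : ∀ i j, B i j = 0 ∨ B i j = 1)
    (hrigid : ∀ S : Matrix (Fin n) (Fin n) ℝ,
      (nnz S : ℝ) < ε₂ * (n : ℝ) ^ 2 → ε₁ * n < ((B - S).rank : ℝ))
    (A : Matrix (Fin n) (Fin n) ℝ) (hA : A = ((n : ℝ) / ε) • 1 + B) :
    schattenF p (A - ((n : ℝ) / ε) • 1) ≤ 2 * ε * schattenF p A ∧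
    nnz (((n : ℝ) / ε) • (1 : Matrix (Fin n) (Fin n) ℝ)) = n ∧
    A.rank = n ∧
    ∀ At : Matrix (Fin n) (Fin n) ℝ,
      ((A - At).rank : ℝ) ≤ ε₁ * (A.rank : ℝ) →
      ε₂ * (n : ℝ) ^ 2 - n ≤ (nnz At : ℝ) := by
  set c : ℝ := n / ε with hc
  have hcn : 2 * (n : ℝ) ≤ c := by rw [hc, le_div_iff₀ hε0]; nlinarith
  have hBnorm (x : EuclideanSpace ℝ (Fin n)) : ‖B.toEuclideanLin x‖ ≤ n * ‖x‖ := by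
    have := norm_toEuclideanLin_le_of_abs_le_one (M := B)
      (fun i j => by rcases hB i j with h | h <;> simp [h]) x
    rwa [Fintype.card_fin, Real.sqrt_mul_self n.cast_nonneg] at this
  have hAnorm (x : EuclideanSpace ℝ (Fin n)) : (c - n) * ‖x‖ ≤ ‖A.toEuclideanLin x‖ := by
    simpa [hA, abs_of_nonneg (by linarith : (0 : ℝ) ≤ c)] using
      le_norm_toEuclideanLin_smul_one_add c (hBnorm x)
  have hrank : A.rank = n := by
    obtain rfl | hn := n.eq_zero_or_pos
    · simpa using A.rank_le_card_width
    · have hgap : 0 < c - n := by linarith [(Nat.cast_pos.2 hn : (0 : ℝ) < n)]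
      simpa using rank_eq_card_of_le_norm_toEuclideanLin hgap hAnorm
  have hnnz : nnz (c • (1 : Matrix (Fin n) (Fin n) ℝ)) = n := by
    obtain rfl | hn := n.eq_zero_or_pos
    · simp [nnz]
    · simpa using nnz_smul_one (n := Fin n) (by positivity : c ≠ 0)
  refine ⟨?_, hnnz, hrank, fun At hAt => ?_⟩
  · rw [hA, add_sub_cancel_left]
    refine schattenF_le_mul_of_singVals_le (by positivity) hp fun j => ?_
    calc singVals B j ≤ n := singVals_le_of_forall_norm_le hBnorm j
      _ ≤ 2 * ε * (c - n) := by
          have hεc : ε * c = n := by rw [hc]; field_simp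
          nlinarith
      _ ≤ 2 * ε * singVals (c • 1 + B) j := by
          gcongr
          exact le_singVals_of_forall_le_norm (hA ▸ hAnorm) j
  · rw [hrank] at hAt
    have := sub_nnz_le_nnz_of_rank_sub_le hrigid (hA ▸ hAt)
    rw [hnnz] at this
    linarith

/-- from a rigid 0/1 matrix `B`, the matrix `A = (n/ε)·I + B` has a sparse
`(2ε, S_p)`-norm approximation for any `p > 0`, has full rank, and every `(ε₁, S_0)`-norm
approximation of it (i.e. rank approximation) has at least `ε₂·n² − n` nonzeros. -/
theorem stmt19 (p : ℝ) (hp : 0 < p) (ε ε₁ ε₂ : ℝ) (hε0 : 0 < ε) (hε : ε ≤ 1 / 2)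
    (hε₁ : 0 < ε₁) (hε₂ : 0 < ε₂) (n : ℕ)
    (B : Matrix (Fin n) (Fin n) ℝ) (hB : ∀ i j, B i j = 0 ∨ B i j = 1)
    (hrigid : ∀ S : Matrix (Fin n) (Fin n) ℝ,
      (nnz S : ℝ) < ε₂ * (n : ℝ) ^ 2 → ε₁ * n < ((B - S).rank : ℝ))
    (A : Matrix (Fin n) (Fin n) ℝ) (hA : A = ((n : ℝ) / ε) • 1 + B) :
    schattenF p (A - ((n : ℝ) / ε) • 1) ≤ 2 * ε * schattenF p A ∧
    nnz (((n : ℝ) / ε) • (1 : Matrix (Fin n) (Fin n) ℝ)) = n ∧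
    A.rank = n ∧
    ∀ At : Matrix (Fin n) (Fin n) ℝ,
      ((A - At).rank : ℝ) ≤ ε₁ * (A.rank : ℝ) →
      ε₂ * (n : ℝ) ^ 2 - n ≤ (nnz At : ℝ) :=
  stmt19_general p hp ε ε₁ ε₂ hε0 hε n B hB hrigid A hA
end
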